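/- arXiv:1102.3984 — 2 statements merged into one kernel-verified Lean document; each statement's English description precedes it below -/
import Mathlib

section
/- Let k be a field of characteristic p > 0, and let S be a finite set of pairwise inequivalent nontrivial rank-1 valuations of k (valuations with value group contained in the positive reals). For each v ∈ S let k_v denote the completion of k with respect to v. Let f(T) = T + b_1 T^p + b_2 T^{p^2} + ... + b_m T^{p^m} be a p-polynomial with coefficients b_1, ..., b_m ∈ k. Then the canonical map k/f(k) → ∏_{v∈S} k_v/f(k_v) is surjective; that is, for every family (x_v)_{v∈S} with x_v ∈ k_v, there exists x ∈ k such that for every v ∈ S one has x − x_v ∈ f(k_v). -/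
/-- An absolute value (rank-1 valuation) is nonarchimedean if it satisfies the
ultrametric inequality. -/
def AbsoluteValue.IsNonarch {k : Type} [Field k] (v : AbsoluteValue k ℝ) : Prop :=
  ∀ x y : k, v (x + y) ≤ max (v x) (v y)

/-- An absolute value is nontrivial if it takes a value `≠ 1` on some nonzero element. -/
def AbsoluteValue.IsNontrivial' {k : Type} [Field k] (v : AbsoluteValue k ℝ) : Prop :=
  ∃ x : k, x ≠ 0 ∧ v x ≠ 1

/-- Two absolute values on `k` are equivalent (induce the same topology) iff one is a
positive real power of the other. -/
def AbsoluteValue.IsEquivalent {k : Type} [Field k] (v w : AbsoluteValue k ℝ) : Prop :=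
  ∃ r : ℝ, 0 < r ∧ ∀ x : k, w x = v x ^ r

/-! The map `y ↦ y + ∑ b_j y ^ p ^ (j + 1)` has derivative `1` at `0`, so by the inverse function
theorem its image in each complete field `K i` is a neighbourhood of `0` (if the norm of `K i` is
trivial, `{0}` is already open). It therefore suffices to find `a ∈ k` with `emb i a` close to
`x i` for every `i`: approximate each `x i` by an element of `k` using density, then approximate
these finitely many elements simultaneously by weak approximation for the pairwise inequivalent
absolute values `v i`. -/

open Filter Topology

theorem hasStrictDerivAt_add_sum_mul_pow_zero {K ι : Type*} [NontriviallyNormedField K]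
    [Fintype ι] (c : ι → K) {e : ι → ℕ} (he : ∀ j, 2 ≤ e j) :
    HasStrictDerivAt (fun y : K ↦ y + ∑ j, c j * y ^ e j) 1 0 := by
  have hterm : ∀ j ∈ Finset.univ, HasStrictDerivAt (fun y : K ↦ c j * y ^ e j) 0 0 := by
    intro j _
    simpa [zero_pow (by have := he j; omega : e j - 1 ≠ 0)] using
      (hasStrictDerivAt_pow (e j) (0 : K)).const_mul (c j)
  have h := (hasStrictDerivAt_id (0 : K)).fun_add (HasStrictDerivAt.fun_sum hterm)
  simp only [id, Finset.sum_const_zero, add_zero] at h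
  exact h

theorem range_add_sum_mul_pow_mem_nhds_zero {K ι : Type*} [NormedField K] [CompleteSpace K]
    [Fintype ι] (c : ι → K) {e : ι → ℕ} (he : ∀ j, 2 ≤ e j) :
    Set.range (fun y : K ↦ y + ∑ j, c j * y ^ e j) ∈ 𝓝 0 := by
  have he0 : ∀ j, e j ≠ 0 := fun j ↦ by have := he j; omega
  by_cases hK : ∃ x : K, 1 < ‖x‖
  · let : NontriviallyNormedField K := { ‹NormedField K› with non_trivial := hK }
    have hmap := (hasStrictDerivAt_add_sum_mul_pow_zero c he).map_nhds_eq one_ne_zero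
    simp only [zero_add, zero_pow (he0 _), mul_zero, Finset.sum_const_zero] at hmap
    exact hmap ▸ range_mem_map
  · push Not at hK
    refine Metric.mem_nhds_iff.2 ⟨1, one_pos, fun y hy ↦ ⟨0, ?_⟩⟩
    obtain rfl : y = 0 := by
      by_contra hy0
      have hy : ‖y‖ < 1 := by simpa using hy
      exact (hK y⁻¹).not_gt (by rwa [norm_inv, one_lt_inv₀ (norm_pos_iff.2 hy0)])
    simp [he0]

namespace AbsoluteValue

theorem isEquivalent_iff_isEquiv {F : Type} [Field F] {v w : AbsoluteValue F ℝ} :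
    v.IsEquivalent w ↔ v.IsEquiv w := by
  rw [isEquiv_iff_exists_rpow_eq, IsEquivalent]
  simp only [funext_iff, eq_comm]

theorem exists_forall_apply_sub_lt {F ι : Type*} [Field F] [Finite ι]
    {v : ι → AbsoluteValue F ℝ} (h : ∀ i, (v i).IsNontrivial)
    (hv : Pairwise fun i j ↦ ¬(v i).IsEquiv (v j)) (c : ι → F) {ε : ι → ℝ}
    (hε : ∀ i, 0 < ε i) : ∃ a : F, ∀ i, v i (a - c i) < ε i := by
  obtain ⟨a, ha⟩ := (denseRange_algebraMap_pi h hv).exists_mem_open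
    (isOpen_set_pi Set.finite_univ fun i _ ↦ Metric.isOpen_ball)
    ⟨fun i ↦ WithAbs.toAbs (v i) (c i), fun i _ ↦ Metric.mem_ball_self (hε i)⟩
  refine ⟨a, fun i ↦ ?_⟩
  simpa [dist_eq_norm, WithAbs.norm_eq_apply_ofAbs, WithAbs.algebraMap_right_apply,
    WithAbs.ofAbs_toAbs] using ha i trivial

theorem exists_forall_norm_map_sub_lt {F ι : Type*} [Field F] [Finite ι]
    {v : ι → AbsoluteValue F ℝ} (h : ∀ i, (v i).IsNontrivial)
    (hv : Pairwise fun i j ↦ ¬(v i).IsEquiv (v j)) {K : ι → Type*}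
    [∀ i, NormedField (K i)] (emb : ∀ i, F →+* K i) (hisom : ∀ i x, ‖emb i x‖ = v i x)
    (hdense : ∀ i, DenseRange (emb i)) (x : ∀ i, K i) {ε : ι → ℝ} (hε : ∀ i, 0 < ε i) :
    ∃ a : F, ∀ i, ‖emb i a - x i‖ < ε i := by
  choose c hc using fun i ↦ (hdense i).exists_dist_lt (x i) (half_pos (hε i))
  obtain ⟨a, ha⟩ := exists_forall_apply_sub_lt h hv c fun i ↦ half_pos (hε i)
  refine ⟨a, fun i ↦ ?_⟩
  calc ‖emb i a - x i‖ ≤ ‖emb i a - emb i (c i)‖ + ‖emb i (c i) - x i‖ :=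
        norm_sub_le_norm_sub_add_norm_sub ..
    _ < ε i / 2 + ε i / 2 := by
      rw [← map_sub, hisom, ← dist_eq_norm, dist_comm]
      exact add_lt_add (ha i) (hc i)
    _ = ε i := add_halves _

end AbsoluteValue

theorem pPolynomial_weak_approximation_general
    (p : ℕ) [Fact p.Prime] (k : Type) [Field k]
    (n : ℕ) (v : Fin n → AbsoluteValue k ℝ)
    (hnt : ∀ i, (v i).IsNontrivial')
    (hpairwise : ∀ i j, i ≠ j → ¬ (v i).IsEquivalent (v j))
    (K : Fin n → Type) [∀ i, NormedField (K i)] [∀ i, CompleteSpace (K i)]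
    (emb : ∀ i, k →+* K i)
    (hisom : ∀ i, ∀ x : k, ‖emb i x‖ = v i x)
    (hdense : ∀ i, DenseRange (emb i))
    (m : ℕ) (b : Fin m → k)
    (x : ∀ i, K i) :
    ∃ a : k, ∀ i, ∃ y : K i,
      emb i a - x i = y + ∑ j : Fin m, emb i (b j) * y ^ p ^ (j.1 + 1) := by
  have hexp : ∀ j : Fin m, 2 ≤ p ^ (j.1 + 1) := fun j ↦
    (Fact.out : p.Prime).two_le.trans (Nat.le_self_pow (Nat.succ_ne_zero j) p)
  choose ε hε hball using fun i ↦ Metric.mem_nhds_iff.1 <|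
    range_add_sum_mul_pow_mem_nhds_zero (fun j ↦ emb i (b j)) hexp
  -- `IsNontrivial'` is definitionally Mathlib's `AbsoluteValue.IsNontrivial`
  obtain ⟨a, ha⟩ := AbsoluteValue.exists_forall_norm_map_sub_lt hnt
    (fun i j hij ↦ AbsoluteValue.isEquivalent_iff_isEquiv.not.1 (hpairwise i j hij))
    emb hisom hdense x hε
  refine ⟨a, fun i ↦ ?_⟩
  obtain ⟨y, hy⟩ := hball i (mem_ball_zero_iff.2 (ha i))
  exact ⟨y, hy.symm⟩

/-- Weak approximation for the images of `p`-polynomials: let `k` be a field of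
characteristic `p > 0` and let `v 1, …, v n` be finitely many pairwise inequivalent
nontrivial rank-1 valuations of `k`, with completions `K i` (complete normed fields in
which `k` embeds isometrically and densely).  Let
`f(T) = T + b 1 * T^p + ⋯ + b m * T^(p^m)` be a `p`-polynomial with coefficients in `k`.
Then the canonical map `k/f(k) → ∏ i, K i / f(K i)` is surjective: for every family
`(x i)` with `x i ∈ K i` there is `a ∈ k` with `a - x i ∈ f(K i)` for all `i`. -/
theorem pPolynomial_weak_approximation
    (p : ℕ) [Fact p.Prime] (k : Type) [Field k] [CharP k p]
    (n : ℕ) (v : Fin n → AbsoluteValue k ℝ)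
    (hna : ∀ i, (v i).IsNonarch) (hnt : ∀ i, (v i).IsNontrivial')
    (hpairwise : ∀ i j, i ≠ j → ¬ (v i).IsEquivalent (v j))
    (K : Fin n → Type) [∀ i, NormedField (K i)] [∀ i, CompleteSpace (K i)]
    (emb : ∀ i, k →+* K i)
    (hisom : ∀ i, ∀ x : k, ‖emb i x‖ = v i x)
    (hdense : ∀ i, DenseRange (emb i))
    (m : ℕ) (b : Fin m → k)
    (x : ∀ i, K i) :
    ∃ a : k, ∀ i, ∃ y : K i,
      emb i a - x i = y + ∑ j : Fin m, emb i (b j) * y ^ p ^ (j.1 + 1) :=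
  pPolynomial_weak_approximation_general p k n v hnt hpairwise K emb hisom hdense m b x
end

section
/- Let K be a field of characteristic p > 0 that is complete with respect to a nontrivial rank-1 valuation, and let f(T) = T + b_1 T^p + b_2 T^{p^2} + ... + b_m T^{p^m} be a p-polynomial with coefficients b_1, ..., b_m ∈ K. Then the image f(K) = {f(x) : x ∈ K} is an open additive subgroup of K (open with respect to the valuation topology). -/
/-!
In characteristic `p` the map `f(x) = x + ∑ bⱼ x^(p^(j+1))` is additive, so its image is a
subgroup, and its derivative is identically `1`, since `(p^(j+1) : K) = 0`. By the inverse
function theorem over the complete nontrivially normed field `K`, `f` is then an open map, so its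
image is open.
-/

section pPolynomial

variable (p : ℕ) {K : Type*}

noncomputable def pPolynomialAddHom [CommSemiring K] [ExpChar K p] {m : ℕ} (b : Fin m → K) :
    K →+ K :=
  AddMonoidHom.id K +
    ∑ j, (AddMonoidHom.mulLeft (b j)).comp (iterateFrobenius K p (j.1 + 1)).toAddMonoidHom

@[simp]
theorem pPolynomialAddHom_apply [CommSemiring K] [ExpChar K p] {m : ℕ} (b : Fin m → K) (x : K) :
    pPolynomialAddHom p b x = x + ∑ j, b j * x ^ p ^ (j.1 + 1) := by
  simp [pPolynomialAddHom, iterateFrobenius_def]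

theorem hasStrictDerivAt_pow_char_pow [NontriviallyNormedField K] [CharP K p] {k : ℕ}
    (hk : k ≠ 0) (x : K) : HasStrictDerivAt (fun x : K ↦ x ^ p ^ k) 0 x := by
  simpa [CharP.cast_eq_zero, hk] using hasStrictDerivAt_pow (p ^ k) x

theorem hasStrictDerivAt_pPolynomial [NontriviallyNormedField K] [CharP K p] {m : ℕ}
    (b : Fin m → K) (x : K) :
    HasStrictDerivAt (fun x : K ↦ x + ∑ j, b j * x ^ p ^ (j.1 + 1)) 1 x := by
  have hsum : HasStrictDerivAt (fun x : K ↦ ∑ j, b j * x ^ p ^ (j.1 + 1)) 0 x := by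
    simpa using HasStrictDerivAt.fun_sum fun j _ ↦
      (hasStrictDerivAt_pow_char_pow p (Nat.succ_ne_zero _) x).const_mul (b j)
  simpa using (hasStrictDerivAt_id x).fun_add hsum

end pPolynomial

theorem pPolynomial_image_isOpen_addSubgroup_general
    (p : ℕ) [Fact p.Prime] (K : Type) [NormedField K] [CompleteSpace K] [CharP K p]
    (hnt : ∃ x : K, x ≠ 0 ∧ ‖x‖ ≠ 1)
    (m : ℕ) (b : Fin m → K) :
    ∃ H : AddSubgroup K,
      (H : Set K) = Set.range (fun x : K => x + ∑ j : Fin m, b j * x ^ p ^ (j.1 + 1)) ∧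
      IsOpen (H : Set K) := by
  let _ := NontriviallyNormedField.ofNormNeOne hnt
  have hrange : ((pPolynomialAddHom p b).range : Set K) =
      Set.range (fun x : K => x + ∑ j : Fin m, b j * x ^ p ^ (j.1 + 1)) := by
    ext; simp
  have hopen := isOpenMap_of_hasStrictDerivAt (f' := fun _ ↦ 1)
    (hasStrictDerivAt_pPolynomial p b) fun _ ↦ one_ne_zero
  exact ⟨_, hrange, hrange ▸ hopen.isOpen_range⟩

/-- Let `K` be a field of characteristic `p > 0`, complete with respect to a nontrivial
rank-1 valuation (encoded as a complete normed field whose norm is multiplicative,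
nonarchimedean and nontrivial), and let
`f(T) = T + b 1 * T^p + ⋯ + b m * T^(p^m)` be a `p`-polynomial with coefficients in `K`.
Then the image `f(K)` is an open additive subgroup of `K`. -/
theorem pPolynomial_image_isOpen_addSubgroup
    (p : ℕ) [Fact p.Prime] (K : Type) [NormedField K] [CompleteSpace K] [CharP K p]
    (hna : ∀ x y : K, ‖x + y‖ ≤ max ‖x‖ ‖y‖)
    (hnt : ∃ x : K, x ≠ 0 ∧ ‖x‖ ≠ 1)
    (m : ℕ) (b : Fin m → K) :
    ∃ H : AddSubgroup K,
      (H : Set K) = Set.range (fun x : K => x + ∑ j : Fin m, b j * x ^ p ^ (j.1 + 1)) ∧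
      IsOpen (H : Set K) :=
  pPolynomial_image_isOpen_addSubgroup_general p K hnt m b
end
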